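/- Let K(s) be a cumulant generating function that is twice continuously differentiable near 0 with K(0)=0, K'(0)=μ, K''(0)=σ² > 0, and suppose K is three times differentiable at 0. Then as γ → μ, the saddlepoint ŝ(γ) defined by K'(ŝ) = γ satisfies ŝ(γ) = (γ-μ)/σ² + o(γ-μ), and ŵ(γ) = sgn(ŝ)·√(2(ŝγ - K(ŝ))) satisfies ŵ(γ) = (γ-μ)/σ + o(γ-μ). -/

import Mathlib

open Filter Asymptotics Topology

/-!
Linearizing `K'` at `0` along the saddlepoint equation `K'(ŝ) = γ` gives `γ - μ - σ²ŝ = o(ŝ)`;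
since `σ² ≠ 0` this forces `ŝ = O(γ - μ)`, and dividing by `σ²` gives the expansion of `ŝ`.
The second-order Taylor expansion of `K` at `0` then gives `2(ŝγ - K(ŝ)) = σ²ŝ² + o(ŝ²)`, and
because `√` is `1/2`-Hölder, `|√a - √b| ≤ √|a - b|`, we get
`ŵ = sgn(ŝ) √(σ²ŝ² + o(ŝ²)) = σŝ + o(ŝ)`, which combined with the first expansion is the second.
-/

theorem Real.abs_sqrt_sub_sqrt_le_sqrt_abs_sub (a b : ℝ) : |√a - √b| ≤ √|a - b| := by
  rw [Real.le_sqrt (abs_nonneg _) (abs_nonneg _), sq_abs]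
  have hsq : |√a ^ 2 - √b ^ 2| ≤ |a - b| := by
    rw [Real.sq_sqrt', Real.sq_sqrt']
    exact abs_max_sub_max_le_abs a b 0
  have hfactor : (√a - √b) ^ 2 ≤ |√a ^ 2 - √b ^ 2| := by
    have ha := Real.sqrt_nonneg a
    have hb := Real.sqrt_nonneg b
    calc (√a - √b) ^ 2 = |√a - √b| * |√a - √b| := by rw [← sq, sq_abs]
      _ ≤ |√a - √b| * |√a + √b| := by
          refine mul_le_mul_of_nonneg_left ?_ (abs_nonneg _)
          rw [abs_of_nonneg (add_nonneg ha hb)]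
          exact abs_sub_le_iff.2 ⟨by linarith, by linarith⟩
      _ = |√a ^ 2 - √b ^ 2| := by rw [← abs_mul]; ring_nf
  linarith

theorem Real.abs_sign_mul_sqrt_sub_mul_le (q s σ : ℝ) (hσ : 0 ≤ σ) :
    |Real.sign s * √q - σ * s| ≤ √|q - σ ^ 2 * s ^ 2| := by
  have hsign : Real.sign s * √q - σ * s = Real.sign s * (√q - √(σ ^ 2 * s ^ 2)) := by
    rw [Real.sqrt_mul (by positivity), Real.sqrt_sq hσ, Real.sqrt_sq_eq_abs]
    rcases lt_trichotomy s 0 with hs | rfl | hs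
    · rw [Real.sign_of_neg hs, abs_of_neg hs]; ring
    · simp
    · rw [Real.sign_of_pos hs, abs_of_pos hs]; ring
  have hsign_le : |Real.sign s| ≤ 1 := by
    rcases Real.sign_apply_eq s with h | h | h <;> simp [h]
  calc |Real.sign s * √q - σ * s| = |Real.sign s| * |√q - √(σ ^ 2 * s ^ 2)| := by
        rw [hsign, abs_mul]
    _ ≤ 1 * √|q - σ ^ 2 * s ^ 2| :=
        mul_le_mul hsign_le (Real.abs_sqrt_sub_sqrt_le_sqrt_abs_sub _ _) (abs_nonneg _) zero_le_one
    _ = √|q - σ ^ 2 * s ^ 2| := one_mul _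

theorem Asymptotics.IsLittleO.sqrt_abs {α : Type*} {l : Filter α} {f g : α → ℝ}
    (h : f =o[l] fun x => g x ^ 2) : (fun x => √|f x|) =o[l] g := by
  refine isLittleO_iff.2 fun ε hε => ?_
  filter_upwards [isLittleO_iff.1 h (by positivity : 0 < ε ^ 2)] with x hx
  simp only [Real.norm_eq_abs, abs_pow, sq_abs] at hx
  rw [Real.norm_of_nonneg (Real.sqrt_nonneg _), Real.norm_eq_abs,
    Real.sqrt_le_left (by positivity)]
  calc |f x| ≤ ε ^ 2 * g x ^ 2 := hx
    _ = (ε * |g x|) ^ 2 := by rw [mul_pow, sq_abs]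

theorem Asymptotics.IsLittleO.sign_mul_sqrt_sub_mul {α : Type*} {l : Filter α} {q s : α → ℝ}
    {σ : ℝ} (hσ : 0 ≤ σ) (h : (fun x => q x - σ ^ 2 * s x ^ 2) =o[l] fun x => s x ^ 2) :
    (fun x => Real.sign (s x) * √(q x) - σ * s x) =o[l] s :=
  (isBigO_of_le _ fun x => by
    rw [Real.norm_eq_abs, Real.norm_of_nonneg (Real.sqrt_nonneg _)]
    exact Real.abs_sign_mul_sqrt_sub_mul_le _ _ _ hσ).trans_isLittleO h.sqrt_abs

theorem Asymptotics.IsLittleO.isBigO_of_sub_const_mul {α : Type*} {l : Filter α}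
    {s u : α → ℝ} {a : ℝ} (ha : a ≠ 0) (h : (fun x => u x - a * s x) =o[l] s) : s =O[l] u := by
  have h' : (fun x => u x - a * s x) =o[l] fun x => a * s x :=
    h.trans_isBigO (isBigO_self_const_mul ha s l)
  refine (isBigO_self_const_mul ha s l).trans ?_
  simpa using h'.right_isBigO_add

theorem isLittleO_sub_taylor_two {f : ℝ → ℝ} {x₀ c : ℝ}
    (hf : ∀ᶠ x in 𝓝 x₀, DifferentiableAt ℝ f x) (hf' : HasDerivAt (deriv f) c x₀) :
    (fun x => f x - f x₀ - deriv f x₀ * (x - x₀) - c * (x - x₀) ^ 2 / 2)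
      =o[𝓝 x₀] fun x => (x - x₀) ^ 2 := by
  obtain ⟨r, hr, hball⟩ := Metric.eventually_nhds_iff_ball.1 hf
  have hnhds : 𝓝[Metric.ball x₀ r] x₀ = 𝓝 x₀ := nhdsWithin_eq_nhds.2 (Metric.ball_mem_nhds x₀ hr)
  have hderiv : ∀ x ∈ Metric.ball x₀ r, HasDerivWithinAt
      (fun x => f x - deriv f x₀ * (x - x₀) - c * (x - x₀) ^ 2 / 2)
      (deriv f x - deriv f x₀ - c * (x - x₀)) (Metric.ball x₀ r) x := by
    intro x hx
    refine HasDerivAt.hasDerivWithinAt ?_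
    have hlinear : HasDerivAt (fun x => deriv f x₀ * (x - x₀)) (deriv f x₀) x := by
      simpa using ((hasDerivAt_id x).sub_const x₀).const_mul (deriv f x₀)
    have hquad : HasDerivAt (fun x => c * (x - x₀) ^ 2 / 2) (c * (x - x₀)) x :=
      ((((hasDerivAt_id x).sub_const x₀).pow 2).const_mul c).div_const 2
        |>.congr_deriv (by simp; ring)
    exact ((hball x hx).hasDerivAt.sub hlinear).sub hquad
  have hlin := hasDerivAt_iff_isLittleO.1 hf'
  rw [← hnhds] at hlin ⊢
  have := (convex_ball x₀ r).isLittleO_pow_succ_real (Metric.mem_ball_self hr) hderiv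
    (n := 1) (by simpa [smul_eq_mul, mul_comm] using hlin)
  exact (this.congr_left fun x => by ring).congr_right fun x => by norm_num

theorem stmt_17_general (K : ℝ → ℝ) (μ σ : ℝ) (hσ : 0 < σ)
    (hsmooth : ∃ U ∈ nhds (0 : ℝ), ContDiffOn ℝ 2 K U)
    (hK0 : K 0 = 0) (hK1 : deriv K 0 = μ) (hK2 : deriv (deriv K) 0 = σ^2)
    (shat : ℝ → ℝ)
    (hsaddle : ∀ᶠ γ in nhds μ, deriv K (shat γ) = γ)
    (hshat0 : Tendsto shat (nhds μ) (nhds 0)) :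
    (fun γ => shat γ - (γ - μ)/σ^2) =o[nhds μ] (fun γ => γ - μ) ∧
    (fun γ => Real.sign (shat γ) * Real.sqrt (2 * (shat γ * γ - K (shat γ)))
        - (γ - μ)/σ) =o[nhds μ] (fun γ => γ - μ) := by
  obtain ⟨U, hU, hKU⟩ := hsmooth
  have hK : ContDiffAt ℝ 2 K 0 := hKU.contDiffAt hU
  have hKdiff : ∀ᶠ s in 𝓝 0, DifferentiableAt ℝ K s :=
    (hK.eventually (by simp)).mono fun s hs => hs.differentiableAt (by norm_num)
  have hK'' : HasDerivAt (deriv K) (σ ^ 2) 0 :=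
    hK2 ▸ ((hK.derivWithin (m := 1) (by norm_num)).differentiableAt one_ne_zero).hasDerivAt
  have hK'lin : (fun s => deriv K s - μ - σ ^ 2 * s) =o[𝓝 0] fun s => s := by
    simpa [hK1, mul_comm] using hasDerivAt_iff_isLittleO.1 hK''
  have hKquad : (fun s => K s - μ * s - σ ^ 2 * s ^ 2 / 2) =o[𝓝 0] fun s => s ^ 2 := by
    simpa [hK0, hK1] using isLittleO_sub_taylor_two hKdiff hK''
  have hlin : (fun γ => γ - μ - σ ^ 2 * shat γ) =o[𝓝 μ] shat :=
    (hK'lin.comp_tendsto hshat0).congr' (hsaddle.mono fun γ hγ => by simp [hγ]) EventuallyEq.rfl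
  have hO : shat =O[𝓝 μ] fun γ => γ - μ :=
    hlin.isBigO_of_sub_const_mul (u := fun γ => γ - μ) (by positivity)
  have hshat : (fun γ => shat γ - (γ - μ) / σ ^ 2) =o[𝓝 μ] fun γ => γ - μ :=
    ((hlin.trans_isBigO hO).const_mul_left (-(σ ^ 2)⁻¹)).congr_left fun γ => by
      field_simp; ring
  have hq : (fun γ => 2 * (shat γ * γ - K (shat γ)) - σ ^ 2 * shat γ ^ 2)
      =o[𝓝 μ] fun γ => shat γ ^ 2 := by
    have hcross : (fun γ => shat γ * (γ - μ - σ ^ 2 * shat γ)) =o[𝓝 μ] fun γ => shat γ ^ 2 :=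
      ((isBigO_refl shat _).mul_isLittleO hlin).congr_right fun γ => (sq _).symm
    refine ((hcross.const_mul_left 2).sub
      ((hKquad.comp_tendsto hshat0).const_mul_left 2)).congr_left fun γ => ?_
    simp only [Function.comp_apply]
    ring
  have hw : (fun γ => Real.sign (shat γ) * √(2 * (shat γ * γ - K (shat γ))) - σ * shat γ)
      =o[𝓝 μ] fun γ => γ - μ :=
    (hq.sign_mul_sqrt_sub_mul hσ.le).trans_isBigO hO
  exact ⟨hshat, (hw.add (hshat.const_mul_left σ)).congr_left fun γ => by field_simp; ring⟩

/-- Local behavior of the saddlepoint and the Lugannani–Rice argument near the mean: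
if `K` is a CGF, twice continuously differentiable near `0`, with `K(0)=0`, `K'(0)=μ`,
`K''(0)=σ² > 0`, and three times differentiable at `0`, and `ŝ(γ)` is the saddlepoint
branch with `K'(ŝ(γ)) = γ` and `ŝ(γ) → 0` as `γ → μ`, then
`ŝ(γ) = (γ-μ)/σ² + o(γ-μ)` and `ŵ(γ) = sgn(ŝ)·√(2(ŝγ - K(ŝ))) = (γ-μ)/σ + o(γ-μ)`. -/
theorem stmt_17 (K : ℝ → ℝ) (μ σ : ℝ) (hσ : 0 < σ)
    (hsmooth : ∃ U ∈ nhds (0 : ℝ), ContDiffOn ℝ 2 K U)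
    (hK0 : K 0 = 0) (hK1 : deriv K 0 = μ) (hK2 : deriv (deriv K) 0 = σ^2)
    (hK3 : DifferentiableAt ℝ (iteratedDeriv 2 K) 0)
    (shat : ℝ → ℝ)
    (hsaddle : ∀ᶠ γ in nhds μ, deriv K (shat γ) = γ)
    (hshat0 : Tendsto shat (nhds μ) (nhds 0)) :
    (fun γ => shat γ - (γ - μ)/σ^2) =o[nhds μ] (fun γ => γ - μ) ∧
    (fun γ => Real.sign (shat γ) * Real.sqrt (2 * (shat γ * γ - K (shat γ)))
        - (γ - μ)/σ) =o[nhds μ] (fun γ => γ - μ) :=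
  stmt_17_general K μ σ hσ hsmooth hK0 hK1 hK2 shat hsaddle hshat0
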